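/- arXiv:2503.13788 — 3 statements merged into one kernel-verified Lean document; each statement's English description precedes it below -/
import Mathlib

section
/- Let a, b ∈ ℝ² be linearly independent vectors and α, β ≥ 0. Then the set C = { (α‖x‖² + a·x, β‖x‖² + b·x) : x ∈ ℝ², ‖x‖² ≤ 1 } ⊆ ℝ² is convex. -/
/-!
Write the map as `x ↦ q x • v + L x` with `q x = x ⬝ᵥ x`, `v = (α, β)` and `L x = (a ⬝ᵥ x, b ⬝ᵥ x)`;
linear independence makes `L` onto, so `v = L w` for some `w`. The set is then the image of the
convex set `{(x, t) | q x ≤ t ≤ 1}` under the linear map `(x, t) ↦ t • v + L x`: moving `(x, t)` to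
`(x + (t - s) • w, s)` does not change its image, and by the intermediate value theorem some
`s ∈ [0, t]` satisfies `q (x + (t - s) • w) = s`.
-/

open Matrix Set

lemma exists_forall_dotProduct_eq_of_linearIndependent {K n : Type*} [Field K] [Fintype n]
    [DecidableEq n] {v : n → n → K} (hv : LinearIndependent K v) (c : n → K) :
    ∃ w, ∀ i, v i ⬝ᵥ w = c i := by
  obtain ⟨w, hw⟩ := mulVec_surjective_iff_isUnit.2
    (linearIndependent_rows_iff_isUnit.1 hv : IsUnit (of v)) c
  exact ⟨w, congrFun hw⟩

lemma convexOn_dotProduct_self (ι : Type*) [Fintype ι] :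
    ConvexOn ℝ univ fun x : ι → ℝ ↦ x ⬝ᵥ x := by
  have hnorm : (fun x : ι → ℝ ↦ x ⬝ᵥ x) =
      (fun y ↦ ‖y‖ ^ 2) ∘ (WithLp.linearEquiv 2 ℝ (ι → ℝ)).symm := by
    ext x
    rw [Function.comp_apply, EuclideanSpace.real_norm_sq_eq]
    simp [dotProduct, sq]
  rw [hnorm]
  exact (convexOn_univ_norm.pow (fun _ _ ↦ norm_nonneg _) 2).comp_linearMap
    (WithLp.linearEquiv 2 ℝ (ι → ℝ)).symm.toLinearMap

section

variable {E F : Type*} [AddCommGroup E] [Module ℝ E] [TopologicalSpace E]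
  [IsTopologicalAddGroup E] [ContinuousSMul ℝ E] [AddCommGroup F] [Module ℝ F]
  {q : E → ℝ}

lemma exists_mem_Icc_apply_add_smul_eq (hq : Continuous q) (hq₀ : ∀ x, 0 ≤ q x)
    {x : E} {t : ℝ} (hxt : q x ≤ t) (w : E) :
    ∃ s ∈ Icc 0 t, q (x + (t - s) • w) = s := by
  set g : ℝ → ℝ := fun s ↦ q (x + (t - s) • w) - s
  have hg : Continuous g := by fun_prop
  obtain ⟨s, hs, hgs⟩ := intermediate_value_Icc' ((hq₀ x).trans hxt) hg.continuousOn
    (show (0 : ℝ) ∈ Icc (g t) (g 0) by simp [g, hxt, hq₀])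
  exact ⟨s, hs, sub_eq_zero.1 hgs⟩

lemma image_smul_add_eq_image_epigraph (hq : Continuous q) (hq₀ : ∀ x, 0 ≤ q x)
    {L : E →ₗ[ℝ] F} {v : F} (hv : v ∈ LinearMap.range L) (c : ℝ) :
    (fun x ↦ q x • v + L x) '' {x | q x ≤ c} =
      (fun p : E × ℝ ↦ p.2 • v + L p.1) '' {p | q p.1 ≤ p.2 ∧ p.2 ≤ c} := by
  obtain ⟨w, rfl⟩ := hv
  apply Subset.antisymm
  · rintro _ ⟨x, hx, rfl⟩
    exact ⟨(x, q x), ⟨le_rfl, hx⟩, rfl⟩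
  · rintro _ ⟨⟨x, t⟩, ⟨hxt, htc⟩, rfl⟩
    obtain ⟨s, hs, hqs⟩ := exists_mem_Icc_apply_add_smul_eq hq hq₀ hxt w
    refine ⟨x + (t - s) • w, hqs.trans_le (hs.2.trans htc), ?_⟩
    simp only [hqs, map_add, map_smul]
    module

theorem convex_image_smul_add_of_mem_range (hq : ConvexOn ℝ univ q) (hqc : Continuous q)
    (hq₀ : ∀ x, 0 ≤ q x) (L : E →ₗ[ℝ] F) {v : F} (hv : v ∈ LinearMap.range L) (c : ℝ) :
    Convex ℝ ((fun x ↦ q x • v + L x) '' {x | q x ≤ c}) := by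
  rw [image_smul_add_eq_image_epigraph hqc hq₀ hv]
  have hepi : Convex ℝ {p : E × ℝ | q p.1 ≤ p.2 ∧ p.2 ≤ c} := by
    have := hq.convex_epigraph.inter (convex_halfSpace_le (LinearMap.snd ℝ E ℝ).isLinear c)
    simpa [ofPred_and] using this
  exact hepi.linear_image ((LinearMap.snd ℝ E ℝ).smulRight v + L ∘ₗ LinearMap.fst ℝ E ℝ)

end

theorem stmt0_general (a b : Fin 2 → ℝ) (hab : LinearIndependent ℝ ![a, b])
    (α β : ℝ) :
    Convex ℝ {p : ℝ × ℝ | ∃ x : Fin 2 → ℝ, x ⬝ᵥ x ≤ 1 ∧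
      p = (α * (x ⬝ᵥ x) + a ⬝ᵥ x, β * (x ⬝ᵥ x) + b ⬝ᵥ x)} := by
  set L := (dotProductBilin ℝ ℝ a).prod (dotProductBilin ℝ ℝ b)
  have hv : (α, β) ∈ LinearMap.range L := by
    obtain ⟨w, hw⟩ := exists_forall_dotProduct_eq_of_linearIndependent hab ![α, β]
    exact ⟨w, Prod.ext (hw 0) (hw 1)⟩
  have hset : {p : ℝ × ℝ | ∃ x : Fin 2 → ℝ, x ⬝ᵥ x ≤ 1 ∧
      p = (α * (x ⬝ᵥ x) + a ⬝ᵥ x, β * (x ⬝ᵥ x) + b ⬝ᵥ x)} =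
      (fun x ↦ (x ⬝ᵥ x) • (α, β) + L x) '' {x | x ⬝ᵥ x ≤ 1} := by
    ext p
    simp only [mem_ofPred_eq, mem_image]
    refine exists_congr fun x ↦ and_congr_right fun _ ↦ eq_comm.trans ?_
    simp [L, mul_comm]
  rw [hset]
  exact convex_image_smul_add_of_mem_range (convexOn_dotProduct_self (Fin 2))
    (continuous_id.dotProduct continuous_id)
    (fun x ↦ by simpa using dotProduct_self_star_nonneg x) L hv 1

theorem stmt0 (a b : Fin 2 → ℝ) (hab : LinearIndependent ℝ ![a, b])
    (α β : ℝ) (hα : 0 ≤ α) (hβ : 0 ≤ β) :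
    Convex ℝ {p : ℝ × ℝ | ∃ x : Fin 2 → ℝ, x ⬝ᵥ x ≤ 1 ∧
      p = (α * (x ⬝ᵥ x) + a ⬝ᵥ x, β * (x ⬝ᵥ x) + b ⬝ᵥ x)} :=
  stmt0_general a b hab α β
end

section
/- Let c, z ∈ ℝ² and ζ ∈ ℝ with ‖z‖² ≤ ζ ≤ 1. Define f₁(μ) = ‖c‖²μ² + (2 c·z + 1)μ + (‖z‖² − ζ) and f₂(μ) = ‖c‖²μ² + (2 c·z)μ + (‖z‖² − 1). Then there exists μ ≥ 0 with f₁(μ) = 0 and f₂(μ) ≤ 0. -/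
/-! Since `f₁(μ) = ‖μ c + z‖² + μ - ζ`, we have `f₁(0) = ‖z‖² - ζ ≤ 0 ≤ f₁(ζ)`, so the
intermediate value theorem gives a root `μ ∈ [0, ζ]`. At any root, `f₂(μ) = -μ - (1 - ζ) ≤ 0`. -/

open Matrix

lemma quadratic_eq_dotProduct_smul_add {ι R : Type*} [Fintype ι] [CommRing R]
    (c z : ι → R) (μ ζ : R) :
    (c ⬝ᵥ c) * μ ^ 2 + (2 * (c ⬝ᵥ z) + 1) * μ + (z ⬝ᵥ z - ζ) =
      (μ • c + z) ⬝ᵥ (μ • c + z) + μ - ζ := by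
  simp only [add_dotProduct, dotProduct_add, smul_dotProduct, dotProduct_smul, smul_eq_mul,
    dotProduct_comm z c]
  ring

lemma dotProduct_self_nonneg {ι : Type*} [Fintype ι] (v : ι → ℝ) : 0 ≤ v ⬝ᵥ v := by
  simpa using dotProduct_star_self_nonneg v

theorem stmt2 (c z : Fin 2 → ℝ) (ζ : ℝ) (h1 : z ⬝ᵥ z ≤ ζ) (h2 : ζ ≤ 1) :
    ∃ μ : ℝ, 0 ≤ μ ∧
      (c ⬝ᵥ c) * μ ^ 2 + (2 * (c ⬝ᵥ z) + 1) * μ + (z ⬝ᵥ z - ζ) = 0 ∧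
      (c ⬝ᵥ c) * μ ^ 2 + (2 * (c ⬝ᵥ z)) * μ + (z ⬝ᵥ z - 1) ≤ 0 := by
  set f : ℝ → ℝ := fun μ => (c ⬝ᵥ c) * μ ^ 2 + (2 * (c ⬝ᵥ z) + 1) * μ + (z ⬝ᵥ z - ζ) with hf
  have hζ : 0 ≤ ζ := (dotProduct_self_nonneg z).trans h1
  have hf0 : f 0 ≤ 0 := by simp only [hf]; linarith
  have hfζ : 0 ≤ f ζ := by
    simp only [hf, quadratic_eq_dotProduct_smul_add]
    linarith [dotProduct_self_nonneg (ζ • c + z)]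
  obtain ⟨μ, ⟨hμ0, -⟩, hμ⟩ := intermediate_value_Icc hζ (by fun_prop) ⟨hf0, hfζ⟩
  refine ⟨μ, hμ0, hμ, ?_⟩
  simp only [hf] at hμ
  linarith
end

section
/- Let E ∈ ℝ² be nonzero, R > 0, L > 0, ω ≠ 0, Imax > 0, A = [[−R/L, ω], [−ω, −R/L]]. For I ∈ ℝ² with ‖I‖ ≤ Imax define P(I) = (3/2)R‖I‖² + (3/2)E·I and W(I) = (R²+ω²L²)‖I‖² + 2(AᵀE)·I + ‖E‖². Then { (P(I), W(I)) : ‖I‖ ≤ Imax } ⊆ ℝ² is convex. -/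
/-!
Here `a = (3/2) E` and `b = 2 Aᵀ E` are linearly independent, so some `w` has `⟪a, w⟫ = α` and
`⟪b, w⟫ = β`. Then
`(α‖x‖² + ⟪a, x⟫, β‖x‖² + ⟪b, x⟫)` is the linear map `x ↦ (⟪a, x⟫, ⟪b, x⟫)` applied to
`x + ‖x‖² w`, so it suffices that `{x + ‖x‖² w : ‖x‖ ≤ r}` is convex. For a convex combination
`y` of two such points, `s ↦ ‖y - s w‖² - s` is nonnegative at `0` and, by convexity of `‖·‖²`,
nonpositive at the combination `t` of the squared norms; a root `s ∈ [0, t]` exhibits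
`y = x + ‖x‖² w` with `x = y - s w` and `‖x‖² = s ≤ r²`.
-/

open Matrix

theorem norm_smul_add_smul_sq_le {F : Type*} [SeminormedAddCommGroup F] [NormedSpace ℝ F]
    (x y : F) {a b : ℝ} (ha : 0 ≤ a) (hb : 0 ≤ b) (hab : a + b = 1) :
    ‖a • x + b • y‖ ^ 2 ≤ a * ‖x‖ ^ 2 + b * ‖y‖ ^ 2 := by
  have h : ‖a • x + b • y‖ ≤ a * ‖x‖ + b * ‖y‖ := by
    simpa [norm_smul, abs_of_nonneg ha, abs_of_nonneg hb] using norm_add_le (a • x) (b • y)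
  obtain rfl : b = 1 - a := by linarith
  nlinarith [mul_nonneg ha hb, sq_nonneg (‖x‖ - ‖y‖), norm_nonneg (a • x + (1 - a) • y)]

theorem convex_image_add_norm_sq_smul {F : Type*} [SeminormedAddCommGroup F] [NormedSpace ℝ F]
    (w : F) (r : ℝ) :
    Convex ℝ ((fun x => x + ‖x‖ ^ 2 • w) '' Metric.closedBall 0 r) := by
  rintro _ ⟨x₁, hx₁, rfl⟩ _ ⟨x₂, hx₂, rfl⟩ a b ha hb hab
  rw [mem_closedBall_zero_iff] at hx₁ hx₂
  set t := a * ‖x₁‖ ^ 2 + b * ‖x₂‖ ^ 2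
  set y := a • (x₁ + ‖x₁‖ ^ 2 • w) + b • (x₂ + ‖x₂‖ ^ 2 • w)
  have hy : y - t • w = a • x₁ + b • x₂ := by simp only [y, t]; module
  have ht : 0 ≤ t := by positivity
  have htr : t ≤ r ^ 2 := by
    have := pow_le_pow_left₀ (norm_nonneg _) hx₁ 2
    have := pow_le_pow_left₀ (norm_nonneg _) hx₂ 2
    nlinarith
  obtain ⟨s, ⟨-, hst⟩, hs⟩ := intermediate_value_Icc' ht
    (f := fun s : ℝ => ‖y - s • w‖ ^ 2 - s) (by fun_prop)
    (show (0 : ℝ) ∈ Set.Icc _ _ from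
      ⟨by simpa only [hy, sub_nonpos] using norm_smul_add_smul_sq_le x₁ x₂ ha hb hab,
       by simp only [zero_smul, sub_zero]; positivity⟩)
  have hs : ‖y - s • w‖ ^ 2 = s := sub_eq_zero.1 hs
  refine ⟨y - s • w, ?_, by simp only [hs, sub_add_cancel]⟩
  rw [mem_closedBall_zero_iff]
  exact (sq_le_sq₀ (norm_nonneg _) ((norm_nonneg _).trans hx₁)).1 (by linarith)

theorem convex_image_quadratic_pair {F : Type*} [SeminormedAddCommGroup F]
    [InnerProductSpace ℝ F] {a b w : F} {α β : ℝ} (haw : inner ℝ a w = α)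
    (hbw : inner ℝ b w = β) (r : ℝ) :
    Convex ℝ ((fun x => (α * ‖x‖ ^ 2 + inner ℝ a x, β * ‖x‖ ^ 2 + inner ℝ b x)) ''
      Metric.closedBall 0 r) := by
  have hf : (fun x => (α * ‖x‖ ^ 2 + inner ℝ a x, β * ‖x‖ ^ 2 + inner ℝ b x)) =
      (innerₛₗ ℝ a).prod (innerₛₗ ℝ b) ∘ fun x => x + ‖x‖ ^ 2 • w := by
    ext x <;> simp only [Function.comp_apply, LinearMap.prod_apply, coe_innerₛₗ_apply,
      Function.prod_apply, inner_add_right, inner_smul_right, haw, hbw] <;> ring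
  rw [hf, Set.image_comp]
  exact (convex_image_add_norm_sq_smul w r).linear_image _

theorem exists_dotProduct_eq_of_linearIndependent {ι : Type*} [Fintype ι] [DecidableEq ι]
    {v : ι → ι → ℝ} (hv : LinearIndependent ℝ v) (c : ι → ℝ) :
    ∃ w, ∀ i, v i ⬝ᵥ w = c i := by
  obtain ⟨w, hw⟩ := mulVec_surjective_iff_isUnit.2 (linearIndependent_rows_iff_isUnit.1 hv) c
  exact ⟨w, fun i => congrFun hw i⟩

-- `!![c, -ω; ω, c]` is multiplication by `c + ω i`, which has no real eigenvalue when `ω ≠ 0`.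
theorem linearIndependent_pair_rotation_mulVec {c ω : ℝ} (hω : ω ≠ 0) {E : Fin 2 → ℝ}
    (hE : E ≠ 0) : LinearIndependent ℝ ![E, !![c, -ω; ω, c] *ᵥ E] := by
  rw [LinearIndependent.pair_iff' hE]
  intro k hk
  have h₀ := congrFun hk 0
  have h₁ := congrFun hk 1
  simp only [Pi.smul_apply, smul_eq_mul, mulVec, dotProduct, of_apply, cons_val', cons_val_fin_one,
    cons_val_zero, Fin.sum_univ_two, cons_val_one, neg_mul] at h₀ h₁
  have hωE : ω * (E 0 ^ 2 + E 1 ^ 2) = 0 := by linear_combination E 1 * h₀ - E 0 * h₁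
  have hsum : E 0 ^ 2 + E 1 ^ 2 = 0 := (mul_eq_zero.1 hωE).resolve_left hω
  refine hE (funext fun i => ?_)
  fin_cases i <;> simp only [Fin.zero_eta, Fin.mk_one, Pi.zero_apply] <;> nlinarith [sq_nonneg (E 0), sq_nonneg (E 1)]

theorem real_inner_toLp_toLp {ι : Type*} [Fintype ι] (u v : ι → ℝ) :
    inner ℝ (WithLp.toLp 2 u) (WithLp.toLp 2 v) = u ⬝ᵥ v := by
  rw [EuclideanSpace.inner_toLp_toLp, star_trivial, dotProduct_comm]

theorem norm_toLp_sq {ι : Type*} [Fintype ι] (u : ι → ℝ) :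
    ‖WithLp.toLp 2 u‖ ^ 2 = u ⬝ᵥ u := by
  rw [← real_inner_self_eq_norm_sq, real_inner_toLp_toLp]

theorem stmt14_general (R L ω Imax : ℝ) (hω : ω ≠ 0)
    (hImax : 0 < Imax) (E : Fin 2 → ℝ) (hE : E ≠ 0)
    (A : Matrix (Fin 2) (Fin 2) ℝ) (hA : A = !![-(R / L), ω; -ω, -(R / L)]) :
    Convex ℝ {p : ℝ × ℝ | ∃ I : Fin 2 → ℝ, I ⬝ᵥ I ≤ Imax ^ 2 ∧
      p = ((3 / 2) * R * (I ⬝ᵥ I) + (3 / 2) * (E ⬝ᵥ I),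
           (R ^ 2 + ω ^ 2 * L ^ 2) * (I ⬝ᵥ I) + 2 * ((Aᵀ.mulVec E) ⬝ᵥ I) + E ⬝ᵥ E)} := by
  have hAt : Aᵀ = !![-(R / L), -ω; ω, -(R / L)] := by
    rw [hA]; ext i j; fin_cases i <;> fin_cases j <;> rfl
  obtain ⟨w, hw⟩ := exists_dotProduct_eq_of_linearIndependent
    (hAt ▸ linearIndependent_pair_rotation_mulVec hω hE) ![R, (R ^ 2 + ω ^ 2 * L ^ 2) / 2]
  have key := (convex_image_quadratic_pair (r := Imax)
    (a := (3 / 2 : ℝ) • WithLp.toLp 2 E) (b := (2 : ℝ) • WithLp.toLp 2 (Aᵀ *ᵥ E))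
    (w := WithLp.toLp 2 w) (α := 3 / 2 * R) (β := R ^ 2 + ω ^ 2 * L ^ 2)
    (by rw [real_inner_smul_left, real_inner_toLp_toLp, show E ⬝ᵥ w = R from hw 0])
    (by rw [real_inner_smul_left, real_inner_toLp_toLp, show (Aᵀ *ᵥ E) ⬝ᵥ w = _ from hw 1]
        simp only [cons_val_one, cons_val_fin_one]; ring)).translate (0, E ⬝ᵥ E)
  convert key using 1
  -- the two `SMul` instances on `ℝ × ℝ` agree only after unfolding
  · rfl
  ext p
  simp only [Set.mem_image, Set.mem_ofPred_eq, mem_closedBall_zero_iff, exists_exists_and_eq_and]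
  rw [(WithLp.equiv 2 (Fin 2 → ℝ)).exists_congr_left]
  refine exists_congr fun I => ?_
  simp only [WithLp.equiv_symm_apply, ← sq_le_sq₀ (norm_nonneg _) hImax.le, norm_toLp_sq,
    real_inner_smul_left, real_inner_toLp_toLp, Prod.mk_add_mk, zero_add]
  rw [add_comm (E ⬝ᵥ E), eq_comm]

theorem stmt14 (R L ω Imax : ℝ) (hR : 0 < R) (hL : 0 < L) (hω : ω ≠ 0)
    (hImax : 0 < Imax) (E : Fin 2 → ℝ) (hE : E ≠ 0)
    (A : Matrix (Fin 2) (Fin 2) ℝ) (hA : A = !![-(R / L), ω; -ω, -(R / L)]) :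
    Convex ℝ {p : ℝ × ℝ | ∃ I : Fin 2 → ℝ, I ⬝ᵥ I ≤ Imax ^ 2 ∧
      p = ((3 / 2) * R * (I ⬝ᵥ I) + (3 / 2) * (E ⬝ᵥ I),
           (R ^ 2 + ω ^ 2 * L ^ 2) * (I ⬝ᵥ I) + 2 * ((Aᵀ.mulVec E) ⬝ᵥ I) + E ⬝ᵥ E)} :=
  stmt14_general R L ω Imax hω hImax E hE A hA
end
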